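/- The degree-2 component of the apolarity annihilator of the cubic y_1^2 y_3 + y_2 y_3^2 in C[x_1,x_2,x_3] is spanned by x_1² − x_2x_3, x_1x_2, x_2², and these three quadrics have a common zero in C^3 away from the origin. -/

import Mathlib

/-!
Every quadric is a combination `∑ cᵢⱼ xᵢxⱼ`, and `xᵢxⱼ` acts as `∂ᵢ∂ⱼ`, so `h ⋄ F` is a linear
form in `y` whose three coefficients are linear in the `cᵢⱼ`. Their vanishing leaves exactly the
quadrics spanned by `x₁² − x₂x₃, x₁x₂, x₂²`, and `(0, 0, 1)` is a common zero of these.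
-/

open MvPolynomial

noncomputable section

lemma pd_comm {n : ℕ} (i j : Fin n) (p : MvPolynomial (Fin n) ℂ) :
    pderiv i (pderiv j p) = pderiv j (pderiv i p) := by
  classical
  induction p using MvPolynomial.induction_on' with
  | monomial s a =>
    rcases eq_or_ne i j with rfl | hij
    · rfl
    · have e1 : (s - Finsupp.single j 1 : Fin n →₀ ℕ) i = s i := by
        simp [Finsupp.sub_apply, Finsupp.single_apply, (Ne.symm hij)]
      have e2 : (s - Finsupp.single i 1 : Fin n →₀ ℕ) j = s j := by
        simp [Finsupp.sub_apply, Finsupp.single_apply, hij]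
      rw [pderiv_monomial, pderiv_monomial, pderiv_monomial, pderiv_monomial, e1, e2,
        tsub_right_comm]
      ring_nf
  | add p q hp hq => simp [map_add, hp, hq]

lemma pdE_comm {n : ℕ} (i j : Fin n) :
    Commute ((pderiv i : Derivation ℂ (MvPolynomial (Fin n) ℂ) _).toLinearMap)
      ((pderiv j : Derivation ℂ (MvPolynomial (Fin n) ℂ) _).toLinearMap) := by
  apply LinearMap.ext
  intro p
  exact pd_comm i j p

/-- The differential operator `∂^m` on polynomials. -/
def dOp {n : ℕ} (m : Fin n →₀ ℕ) : Module.End ℂ (MvPolynomial (Fin n) ℂ) :=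
  Finset.univ.noncommProd
    (fun i => ((pderiv i : Derivation ℂ (MvPolynomial (Fin n) ℂ) _).toLinearMap) ^ (m i))
    (fun i _ j _ _ => (pdE_comm i j).pow_pow _ _)

lemma dOp_add {n : ℕ} (a b : Fin n →₀ ℕ) : dOp (a + b) = dOp a * dOp b := by
  classical
  unfold dOp
  refine Eq.trans ?_ (Finset.noncommProd_mul_distrib _ _
    (fun i _ j _ _ => (pdE_comm i j).pow_pow _ _) (fun i _ j _ _ => (pdE_comm i j).pow_pow _ _)
    (fun i _ j _ _ => (pdE_comm i j).pow_pow _ _))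
  · apply Finset.noncommProd_congr rfl
    intro i _
    simp [Finsupp.add_apply, Pi.mul_apply, pow_add]
  all_goals exact fun i _ j _ _ => (pdE_comm i j).pow_pow _ _

/-- The apolarity action of `ℂ[x_1,…,x_n]` on `ℂ[y_1,…,y_n]` (both realized as
`MvPolynomial (Fin n) ℂ`), as an algebra homomorphism into endomorphisms. -/
def diamondHom {n : ℕ} :
    MvPolynomial (Fin n) ℂ →ₐ[ℂ] Module.End ℂ (MvPolynomial (Fin n) ℂ) :=
  AddMonoidAlgebra.lift ℂ _ (Fin n →₀ ℕ)
    { toFun := fun m => dOp (Multiplicative.toAdd m)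
      map_one' := by
        simp only [toAdd_one, dOp]
        apply Finset.noncommProd_eq_pow_card (m := 1) _ _ _ _ |>.trans (one_pow _)
        intro i _
        simp
      map_mul' := fun a b => by
        simpa using dOp_add (Multiplicative.toAdd a) (Multiplicative.toAdd b) }

/-- `h ⋄ F` : the result of applying the differential operator `h(∂/∂y₁,…,∂/∂yₙ)` to `F`. -/
def diamond {n : ℕ} (h F : MvPolynomial (Fin n) ℂ) : MvPolynomial (Fin n) ℂ :=
  diamondHom h F

/-- The apolarity annihilator ideal `F^⊥ = {h : h ⋄ F = 0}`. -/
def perpIdeal {n : ℕ} (F : MvPolynomial (Fin n) ℂ) : Ideal (MvPolynomial (Fin n) ℂ) where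
  carrier := {h | diamond h F = 0}
  zero_mem' := by simp [diamond]
  add_mem' := by
    intro a b ha hb
    simp only [Set.mem_setOf_eq, diamond, map_add, LinearMap.add_apply] at *
    rw [ha, hb, add_zero]
  smul_mem' := by
    intro c x hx
    simp only [Set.mem_setOf_eq, diamond, smul_eq_mul, map_mul, Module.End.mul_apply] at *
    rw [hx, map_zero]

section Apolarity

variable {n : ℕ}

lemma dOp_single_one (i : Fin n) :
    dOp (Finsupp.single i 1) =
      (pderiv i : Derivation ℂ (MvPolynomial (Fin n) ℂ) _).toLinearMap := by
  classical
  refine (Finset.mul_noncommProd_erase _ (Finset.mem_univ i) _ _).symm.trans ?_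
  rw [Finsupp.single_eq_same, pow_one, ← mul_one (pderiv i).toLinearMap]
  congr 1
  refine (Finset.noncommProd_eq_pow_card _ _ _ 1 fun j hj => ?_).trans (one_pow _)
  simp [Finset.ne_of_mem_erase hj]

lemma diamondHom_X (i : Fin n) :
    diamondHom (X i) = (pderiv i : Derivation ℂ (MvPolynomial (Fin n) ℂ) _).toLinearMap := by
  have hX : (X i : MvPolynomial (Fin n) ℂ) = AddMonoidAlgebra.single (Finsupp.single i 1) 1 := rfl
  rw [diamondHom, hX, AddMonoidAlgebra.lift_single, one_smul]
  exact dOp_single_one i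

lemma diamond_sum_smul_X_mul_X (c : Fin n → Fin n → ℂ) (F : MvPolynomial (Fin n) ℂ) :
    diamond (∑ i, ∑ j, c i j • (X i * X j)) F = ∑ i, ∑ j, c i j • pderiv i (pderiv j F) := by
  simp [diamond, diamondHom_X]

end Apolarity

open scoped Pointwise in
lemma MvPolynomial.homogeneousSubmodule_two_eq_span {σ R : Type*} [CommSemiring R] :
    homogeneousSubmodule σ R 2 =
      Submodule.span R (Set.range fun ij : σ × σ => X ij.1 * X ij.2) := by
  rw [← homogeneousSubmodule_one_pow, homogeneousSubmodule_one_eq_span_X, Submodule.span_pow,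
    sq, ← Set.image2_mul, Set.image2_range]

lemma MvPolynomial.IsHomogeneous.exists_eq_sum_smul_X_mul_X {σ R : Type*} [CommSemiring R]
    [Fintype σ] {φ : MvPolynomial σ R} (hφ : φ.IsHomogeneous 2) :
    ∃ c : σ → σ → R, φ = ∑ i, ∑ j, c i j • (X i * X j) := by
  rw [← mem_homogeneousSubmodule, homogeneousSubmodule_two_eq_span,
    Submodule.mem_span_range_iff_exists_fun] at hφ
  obtain ⟨c, hc⟩ := hφ
  exact ⟨fun i j => c (i, j), by rw [← hc, Fintype.sum_prod_type]⟩

lemma eq_zero_of_smul_X_add_smul_X_add_smul_X_eq_zero {a b c : ℂ}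
    (h : a • X 0 + b • X 1 + c • X 2 = (0 : MvPolynomial (Fin 3) ℂ)) : a = 0 ∧ b = 0 ∧ c = 0 := by
  have := Fintype.linearIndependent_iff.1 (linearIndependent_X (σ := Fin 3) (R := ℂ)) ![a, b, c]
    (by simpa [Fin.sum_univ_three] using h)
  exact ⟨this 0, this 1, this 2⟩

lemma sum_smul_pderiv_pderiv_cubic (c : Fin 3 → Fin 3 → ℂ) :
    ∑ i, ∑ j, c i j • pderiv i (pderiv j (X 0 ^ 2 * X 2 + X 1 * X 2 ^ 2 : MvPolynomial (Fin 3) ℂ)) =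
      (2 * (c 0 2 + c 2 0)) • X 0 + (2 * c 2 2) • X 1 + (2 * (c 0 0 + c 1 2 + c 2 1)) • X 2 := by
  simp only [Fin.sum_univ_three, sq, map_add, Derivation.leibniz, pderiv_X, Pi.single_apply,
    Fin.reduceEq, ↓reduceIte, Derivation.map_one_eq_zero, smul_eq_mul, smul_eq_C_mul, C_mul,
    map_ofNat, map_zero]
  ring

lemma sum_smul_X_mul_X_mem_span_of_diamond_cubic_eq_zero (c : Fin 3 → Fin 3 → ℂ)
    (hc : diamond (∑ i, ∑ j, c i j • (X i * X j)) (X 0 ^ 2 * X 2 + X 1 * X 2 ^ 2) = 0) :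
    ∑ i, ∑ j, c i j • (X i * X j) ∈ Submodule.span ℂ
      ({X 0 ^ 2 - X 1 * X 2, X 0 * X 1, X 1 ^ 2} : Set (MvPolynomial (Fin 3) ℂ)) := by
  rw [diamond_sum_smul_X_mul_X, sum_smul_pderiv_pderiv_cubic] at hc
  obtain ⟨h02, h22, h00⟩ := eq_zero_of_smul_X_add_smul_X_add_smul_X_eq_zero hc
  have e20 : c 2 0 = -c 0 2 := by linear_combination h02 / 2
  have e21 : c 2 1 = -(c 0 0 + c 1 2) := by linear_combination h00 / 2
  have e22 : c 2 2 = 0 := by linear_combination h22 / 2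
  refine Submodule.mem_span_triple.2 ⟨c 0 0, c 0 1 + c 1 0, c 1 1, ?_⟩
  simp only [Fin.sum_univ_three, e20, e21, e22, smul_eq_C_mul, map_neg, map_add, map_zero]
  ring

lemma span_quadrics_le_homogeneousSubmodule :
    Submodule.span ℂ ({X 0 ^ 2 - X 1 * X 2, X 0 * X 1, X 1 ^ 2} : Set (MvPolynomial (Fin 3) ℂ)) ≤
      homogeneousSubmodule (Fin 3) ℂ 2 := by
  have hXX (i j : Fin 3) : X i * X j ∈ homogeneousSubmodule (Fin 3) ℂ 2 :=
    (isHomogeneous_X ℂ i).mul (isHomogeneous_X ℂ j)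
  rw [Submodule.span_le, Set.insert_subset_iff, Set.insert_subset_iff, Set.singleton_subset_iff]
  exact ⟨sq (X 0 : MvPolynomial (Fin 3) ℂ) ▸ sub_mem (hXX 0 0) (hXX 1 2), hXX 0 1,
    sq (X 1 : MvPolynomial (Fin 3) ℂ) ▸ hXX 1 1⟩

lemma span_quadrics_le_perpIdeal_cubic :
    Submodule.span ℂ ({X 0 ^ 2 - X 1 * X 2, X 0 * X 1, X 1 ^ 2} : Set (MvPolynomial (Fin 3) ℂ)) ≤
      (perpIdeal (X 0 ^ 2 * X 2 + X 1 * X 2 ^ 2)).restrictScalars ℂ := by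
  simp [Submodule.span_le, Set.insert_subset_iff, perpIdeal, diamond, diamondHom_X, sq, pderiv_X,
    one_add_one_eq_two, mul_two]

/-- The degree-2 component of the apolarity annihilator of the cubic `y₁²y₃ + y₂y₃²` is
spanned by `x₁² − x₂x₃, x₁x₂, x₂²`, and these three quadrics have a common zero in `ℂ³`
away from the origin. -/
theorem c4_perp_quadrics :
    (∀ h : MvPolynomial (Fin 3) ℂ,
      (h ∈ homogeneousSubmodule (Fin 3) ℂ 2 ∧
          diamond h (X 0 ^ 2 * X 2 + X 1 * X 2 ^ 2) = 0) ↔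
        h ∈ Submodule.span ℂ
          ({X 0 ^ 2 - X 1 * X 2, X 0 * X 1, X 1 ^ 2} :
            Set (MvPolynomial (Fin 3) ℂ))) ∧
    ∃ x : Fin 3 → ℂ, x ≠ 0 ∧
      MvPolynomial.eval x (X 0 ^ 2 - X 1 * X 2 : MvPolynomial (Fin 3) ℂ) = 0 ∧
      MvPolynomial.eval x (X 0 * X 1 : MvPolynomial (Fin 3) ℂ) = 0 ∧
      MvPolynomial.eval x (X 1 ^ 2 : MvPolynomial (Fin 3) ℂ) = 0 := by
  refine ⟨fun h => ⟨?_, fun hh => ⟨span_quadrics_le_homogeneousSubmodule hh,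
    span_quadrics_le_perpIdeal_cubic hh⟩⟩, ?_⟩
  · rintro ⟨hhom, hperp⟩
    obtain ⟨c, rfl⟩ := hhom.exists_eq_sum_smul_X_mul_X
    exact sum_smul_X_mul_X_mem_span_of_diamond_cubic_eq_zero c hperp
  · exact ⟨![0, 0, 1], fun hx => by simpa using congrFun hx 2, by simp, by simp, by simp⟩

end
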